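/- Let G be a simple graph on n ≥ 1 vertices with m edges and clique number ω = ω(G). For k = 1,…,m let E_k = (1/2)E_{i_k j_k} + (1/2)E_{j_k i_k}, where {i_k, j_k} is the k-th edge of G and E_{ij} is the n×n matrix with a 1 in entry (i,j) and zeroes elsewhere. For a positive integer ℓ define M_ℓ := max_{‖u‖₂ = 1} { Σ_{i=1}^{ℓ} (u^T (ℓ^{−1} I) u)² + Σ_{k=1}^{m} (u^T E_k u)² + Σ_{k=1}^{m} (u^T E_k u)² }, the maximum taken over unit vectors u ∈ ℝ^n. Then M_ℓ = 1 + (ω − ℓ)/(ℓω). -/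

import Mathlib

/-!
Put `x = u ^ 2`, a point of the standard simplex. The `ℓ` identity terms contribute `ℓ⁻¹`, and
the two edge sums add up to `x ⬝ᵥ A *ᵥ x` for the adjacency matrix `A` of `G`, so the theorem is
the Motzkin–Straus theorem: the maximum of `x ⬝ᵥ A *ᵥ x` over the simplex is `1 - 1/ω`.

For the upper bound, moving all the mass of `x` from a vertex `i` to a non-adjacent vertex `j`
with `(A *ᵥ x) i ≤ (A *ᵥ x) j` does not decrease the form (it is affine along `eⱼ - eᵢ`), so by
induction on the support one may assume that the support is a clique. There
`x ⬝ᵥ A *ᵥ x = 1 - ∑ xᵢ ^ 2`, which Cauchy–Schwarz bounds by `1 - 1/ω`. The uniform vector on a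
maximum clique attains the bound.
-/

open Matrix Finset

theorem dotProduct_half_single_add_half_single_mulVec {n : Type*} [Fintype n] [DecidableEq n]
    (u : n → ℝ) (p q : n) :
    u ⬝ᵥ ((1/2 : ℝ) • single p q 1 + (1/2 : ℝ) • single q p 1) *ᵥ u = u p * u q := by
  simp only [smul_single, smul_eq_mul, mul_one, add_mulVec, single_mulVec_eq, dotProduct_add,
    dotProduct_smul, dotProduct_single]
  ring

theorem sum_fin_sq_dotProduct_inv_smul_one_mulVec {n : Type*} [Fintype n] [DecidableEq n]
    (ℓ : ℕ) {u : n → ℝ} (hu : ∑ i, u i ^ 2 = 1) :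
    ∑ _i : Fin ℓ, (u ⬝ᵥ ((ℓ : ℝ)⁻¹ • (1 : Matrix n n ℝ)) *ᵥ u) ^ 2 = (ℓ : ℝ)⁻¹ := by
  rw [smul_mulVec, one_mulVec, dotProduct_smul, smul_eq_mul]
  simp only [dotProduct, ← sq, hu, mul_one, sum_const, card_univ, Fintype.card_fin, nsmul_eq_mul]
  rcases eq_or_ne (ℓ : ℝ) 0 with h | h
  · simp [h]
  · field_simp

namespace SimpleGraph

theorem cliqueNum_pos {V : Type*} [Finite V] [Nonempty V] (G : SimpleGraph V) :
    0 < G.cliqueNum :=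
  IsClique.card_le_cliqueNum (t := {Classical.arbitrary V}) (tc := by simp)

variable {V : Type*} [Fintype V] (G : SimpleGraph V) [DecidableRel G.Adj]

theorem sq_sum_eq_sum_sq_add_dotProduct_adjMatrix_add_compl [DecidableEq V] (x : V → ℝ) :
    (∑ i, x i) ^ 2 = ∑ i, x i ^ 2 + x ⬝ᵥ G.adjMatrix ℝ *ᵥ x + x ⬝ᵥ Gᶜ.adjMatrix ℝ *ᵥ x := by
  have h := congrArg (fun M => x ⬝ᵥ M *ᵥ x) (G.one_add_adjMatrix_add_compl_adjMatrix_eq_of_one ℝ)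
  simp only [add_mulVec, dotProduct_add, one_mulVec, compl_adjMatrix_eq_adjMatrix_compl] at h
  have hdiag : x ⬝ᵥ x = ∑ i, x i ^ 2 := by simp [dotProduct, sq]
  have hones : x ⬝ᵥ of 1 *ᵥ x = (∑ i, x i) ^ 2 := by
    simp [dotProduct, mulVec, sq, ← Finset.sum_mul]
  linarith

theorem dotProduct_compl_adjMatrix_mulVec_eq_zero [DecidableEq V] {x : V → ℝ}
    (hx : G.IsClique (Function.support x)) : x ⬝ᵥ Gᶜ.adjMatrix ℝ *ᵥ x = 0 := by
  rw [dotProduct_mulVec_adjMatrix]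
  refine sum_eq_zero fun i _ => sum_eq_zero fun j _ => ?_
  rw [ite_eq_right_iff, compl_adj]
  rintro ⟨hij, hnadj⟩
  by_contra h
  exact hnadj (hx (left_ne_zero_of_mul h) (right_ne_zero_of_mul h) hij)

theorem dotProduct_adjMatrix_mulVec_eq_of_isClique [DecidableEq V] {x : V → ℝ}
    (hx : G.IsClique (Function.support x)) :
    x ⬝ᵥ G.adjMatrix ℝ *ᵥ x = (∑ i, x i) ^ 2 - ∑ i, x i ^ 2 := by
  linarith [G.sq_sum_eq_sum_sq_add_dotProduct_adjMatrix_add_compl x,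
    G.dotProduct_compl_adjMatrix_mulVec_eq_zero hx]

variable {G} in
theorem dotProduct_adjMatrix_mulVec_le_add_smul_single_sub_single [DecidableEq V] (x : V → ℝ)
    {i j : V} (hnadj : ¬G.Adj i j)
    (hAx : (G.adjMatrix ℝ *ᵥ x) i ≤ (G.adjMatrix ℝ *ᵥ x) j) (hxi : 0 ≤ x i) :
    x ⬝ᵥ G.adjMatrix ℝ *ᵥ x ≤
      (x + x i • (Pi.single j 1 - Pi.single i 1)) ⬝ᵥ
        G.adjMatrix ℝ *ᵥ (x + x i • (Pi.single j 1 - Pi.single i 1)) := by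
  set A := G.adjMatrix ℝ
  set d : V → ℝ := Pi.single j 1 - Pi.single i 1
  have hsymm : x ⬝ᵥ A *ᵥ d = d ⬝ᵥ A *ᵥ x := by
    rw [dotProduct_mulVec, ← mulVec_transpose, transpose_adjMatrix, dotProduct_comm]
  have hdx : d ⬝ᵥ A *ᵥ x = (A *ᵥ x) j - (A *ᵥ x) i := by
    simp [d, sub_dotProduct]
  have hdd : d ⬝ᵥ A *ᵥ d = 0 := by
    simp [d, A, sub_dotProduct, mulVec_sub, adjMatrix_apply, hnadj, G.adj_comm j i]
  simp only [mulVec_add, mulVec_smul, dotProduct_add, add_dotProduct, smul_dotProduct,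
    dotProduct_smul, smul_eq_mul, hsymm, hdx, hdd]
  nlinarith

variable {G} in
theorem exists_support_ssubset_le_dotProduct_adjMatrix_mulVec [DecidableEq V] {x : V → ℝ}
    (hx : 0 ≤ x) {i j : V} (hij : i ≠ j) (hnadj : ¬G.Adj i j) (hi : x i ≠ 0) (hj : x j ≠ 0) :
    ∃ y : V → ℝ, 0 ≤ y ∧ ∑ p, y p = ∑ p, x p ∧
      x ⬝ᵥ G.adjMatrix ℝ *ᵥ x ≤ y ⬝ᵥ G.adjMatrix ℝ *ᵥ y ∧
      Function.support y ⊂ Function.support x := by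
  wlog hAx : (G.adjMatrix ℝ *ᵥ x) i ≤ (G.adjMatrix ℝ *ᵥ x) j generalizing i j
  · exact this hij.symm (fun h => hnadj h.symm) hj hi (le_of_not_ge hAx)
  refine ⟨x + x i • (Pi.single j 1 - Pi.single i 1), fun p => ?_, ?_,
    dotProduct_adjMatrix_mulVec_le_add_smul_single_sub_single x hnadj hAx (hx i), ?_⟩
  · rcases eq_or_ne p i with rfl | hpi
    · simp [hij.symm]
    rcases eq_or_ne p j with rfl | hpj
    · simpa [hpi] using add_nonneg (hx p) (hx i)
    · simpa [hpi, hpj] using hx p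
  · simp [Finset.sum_add_distrib, ← Finset.mul_sum, Finset.sum_sub_distrib]
  · refine Set.ssubset_iff_of_subset (fun p hp => ?_) |>.mpr ⟨i, hi, by simp [hij.symm]⟩
    rcases eq_or_ne p j with rfl | hpj
    · exact hj
    · rcases eq_or_ne p i with rfl | hpi
      · simp [hij.symm] at hp
      · simpa [hpi, hpj] using hp

theorem dotProduct_adjMatrix_mulVec_le_of_isClique [DecidableEq V] {x : V → ℝ}
    (hclique : G.IsClique (Function.support x)) (hsum : ∑ i, x i = 1) :
    x ⬝ᵥ G.adjMatrix ℝ *ᵥ x ≤ 1 - (G.cliqueNum : ℝ)⁻¹ := by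
  set s := univ.filter (x · ≠ 0)
  have hs_sum : ∑ i ∈ s, x i = 1 := by rw [sum_filter_ne_zero, hsum]
  have hs_pos : 0 < #s := card_pos.mpr (nonempty_of_sum_ne_zero (by rw [hs_sum]; simp))
  have hs_le : #s ≤ G.cliqueNum :=
    IsClique.card_le_cliqueNum (tc := by simpa [s, Function.support] using hclique)
  have hcs : 1 ≤ (#s : ℝ) * ∑ i ∈ s, x i ^ 2 := by
    simpa [hs_sum] using sq_sum_le_card_mul_sum_sq (s := s) (f := x)
  have hsq : ∑ i ∈ s, x i ^ 2 ≤ ∑ i, x i ^ 2 :=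
    sum_le_univ_sum_of_nonneg fun i => sq_nonneg (x i)
  have hinv : (G.cliqueNum : ℝ)⁻¹ ≤ (#s : ℝ)⁻¹ :=
    inv_anti₀ (by exact_mod_cast hs_pos) (by exact_mod_cast hs_le)
  have hs_inv : (#s : ℝ)⁻¹ ≤ ∑ i ∈ s, x i ^ 2 := by
    rw [inv_le_iff_one_le_mul₀ (by exact_mod_cast hs_pos)]
    linarith
  rw [G.dotProduct_adjMatrix_mulVec_eq_of_isClique hclique, hsum]
  linarith

theorem dotProduct_adjMatrix_mulVec_le_one_sub_inv_cliqueNum [DecidableEq V] {x : V → ℝ}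
    (hx : 0 ≤ x) (hsum : ∑ i, x i = 1) :
    x ⬝ᵥ G.adjMatrix ℝ *ᵥ x ≤ 1 - (G.cliqueNum : ℝ)⁻¹ := by
  induction hN : (Function.support x).ncard using Nat.strong_induction_on generalizing x with
  | _ N ih =>
  by_cases hclique : G.IsClique (Function.support x)
  · exact G.dotProduct_adjMatrix_mulVec_le_of_isClique hclique hsum
  obtain ⟨i, hi, j, hj, hij, hnadj⟩ : ∃ i ∈ Function.support x, ∃ j ∈ Function.support x,
      i ≠ j ∧ ¬G.Adj i j := by
    simpa [IsClique, Set.Pairwise] using hclique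
  obtain ⟨y, hy, hy_sum, hxy, hsupp⟩ :=
    exists_support_ssubset_le_dotProduct_adjMatrix_mulVec hx hij hnadj hi hj
  exact hxy.trans (ih _ (hN ▸ Set.ncard_lt_ncard hsupp) hy (hy_sum.trans hsum) rfl)

theorem sum_sum_ite_adj_eq_of_edge_enum {ι M : Type*} [Fintype ι] [AddCommMonoid M]
    {a b : ι → V} (hab : ∀ k, G.Adj (a k) (b k))
    (hinj : Function.Injective fun k => s(a k, b k))
    (hsurj : ∀ e ∈ G.edgeFinset, ∃ k, s(a k, b k) = e) (f : V → V → M) :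
    ∑ i, ∑ j, (if G.Adj i j then f i j else 0) = ∑ k, (f (a k) (b k) + f (b k) (a k)) := by
  let orient : ι × Bool → V × V := fun ko => bif ko.2 then (b ko.1, a ko.1) else (a ko.1, b ko.1)
  have hedge : ∀ ko, s((orient ko).1, (orient ko).2) = s(a ko.1, b ko.1) := by
    rintro ⟨k, _ | _⟩ <;> simp [orient, Sym2.eq_swap]
  calc ∑ i, ∑ j, (if G.Adj i j then f i j else 0)
      = ∑ p ∈ univ.filter (fun p : V × V => G.Adj p.1 p.2), f p.1 p.2 := by
        rw [sum_filter, ← Fintype.sum_prod_type']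
    _ = ∑ ko : ι × Bool, f (orient ko).1 (orient ko).2 := by
        symm
        refine sum_bij (fun ko _ => orient ko) ?_ ?_ ?_ (fun _ _ => rfl)
        · rintro ⟨k, _ | _⟩ - <;> simp [orient, hab k, (hab k).symm]
        · rintro ⟨k, o⟩ - ⟨k', o'⟩ - h
          have hk : k = k' := hinj (by simpa [hedge] using congrArg (fun p => s(p.1, p.2)) h)
          subst hk
          cases o <;> cases o' <;> simp_all [orient, (hab k).ne, (hab k).ne.symm]
        · rintro ⟨p, q⟩ hpq
          obtain ⟨k, hk⟩ := hsurj s(p, q) (by simpa using hpq)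
          rcases Sym2.eq_iff.mp hk with ⟨rfl, rfl⟩ | ⟨rfl, rfl⟩
          exacts [⟨(k, false), mem_univ _, rfl⟩, ⟨(k, true), mem_univ _, rfl⟩]
    _ = ∑ k, (f (a k) (b k) + f (b k) (a k)) := by
        simp [Fintype.sum_prod_type, orient, add_comm]

variable {G} in
theorem IsClique.dotProduct_adjMatrix_mulVec_uniform [DecidableEq V] {s : Finset V}
    (hs : G.IsClique (s : Set V)) (hne : s.Nonempty) :
    let x : V → ℝ := fun i => if i ∈ s then (#s : ℝ)⁻¹ else 0
    ∑ i, x i = 1 ∧ x ⬝ᵥ G.adjMatrix ℝ *ᵥ x = 1 - (#s : ℝ)⁻¹ := by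
  intro x
  have hcard : (#s : ℝ) ≠ 0 := by exact_mod_cast hne.card_pos.ne'
  have hsum : ∑ i, x i = 1 := by simp [x, sum_ite_mem, hcard]
  refine ⟨hsum, ?_⟩
  have hsupp : Function.support x ⊆ s := by
    intro i hi
    by_contra h
    simp [x, Finset.mem_coe.not.mp h] at hi
  rw [G.dotProduct_adjMatrix_mulVec_eq_of_isClique (hs.subset hsupp), hsum]
  simp only [x, ite_pow, inv_pow, ne_eq, OfNat.ofNat_ne_zero, not_false_eq_true, zero_pow,
    sum_ite_mem, univ_inter, sum_const, nsmul_eq_mul]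
  field_simp

theorem exists_dotProduct_adjMatrix_mulVec_eq_one_sub_inv_cliqueNum [DecidableEq V]
    [Nonempty V] :
    ∃ x : V → ℝ, 0 ≤ x ∧ ∑ i, x i = 1 ∧ x ⬝ᵥ G.adjMatrix ℝ *ᵥ x = 1 - (G.cliqueNum : ℝ)⁻¹ := by
  obtain ⟨s, hs⟩ := G.exists_isNClique_cliqueNum
  have hne : s.Nonempty := card_pos.mp (hs.card_eq ▸ G.cliqueNum_pos)
  obtain ⟨hsum, hQ⟩ := hs.isClique.dotProduct_adjMatrix_mulVec_uniform hne
  refine ⟨_, fun i => ?_, hsum, hs.card_eq ▸ hQ⟩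
  dsimp only
  split_ifs <;> positivity

theorem sum_sq_add_sum_sq_eq_dotProduct_adjMatrix_mulVec [DecidableEq V] {ι : Type*}
    [Fintype ι] {a b : ι → V} (hab : ∀ k, G.Adj (a k) (b k))
    (hinj : Function.Injective fun k => s(a k, b k))
    (hsurj : ∀ e ∈ G.edgeFinset, ∃ k, s(a k, b k) = e) {E : ι → Matrix V V ℝ}
    (hE : ∀ k, E k = (1/2 : ℝ) • single (a k) (b k) 1 + (1/2 : ℝ) • single (b k) (a k) 1)
    (u : V → ℝ) :
    ∑ k, (u ⬝ᵥ E k *ᵥ u) ^ 2 + ∑ k, (u ⬝ᵥ E k *ᵥ u) ^ 2 = u ^ 2 ⬝ᵥ G.adjMatrix ℝ *ᵥ u ^ 2 := by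
  rw [dotProduct_mulVec_adjMatrix, G.sum_sum_ite_adj_eq_of_edge_enum hab hinj hsurj,
    ← sum_add_distrib]
  refine sum_congr rfl fun k _ => ?_
  simp only [hE, dotProduct_half_single_add_half_single_mulVec, Pi.pow_apply]
  ring

end SimpleGraph

/-- `M_ℓ = 1 + (ω − ℓ)/(ℓω)`.  Here `a k, b k` are the endpoints of
the `k`-th edge of `G` (the map `k ↦ {a k, b k}` enumerates the edge set), and
`E k = (1/2)E_{a_k b_k} + (1/2)E_{b_k a_k}`. -/
theorem stmt_6 (n m : ℕ) (hn : 1 ≤ n) (G : SimpleGraph (Fin n)) [DecidableRel G.Adj]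
    (a b : Fin m → Fin n)
    (hab : ∀ k, G.Adj (a k) (b k))
    (hinj : Function.Injective fun k => s(a k, b k))
    (hsurj : ∀ e ∈ G.edgeFinset, ∃ k, s(a k, b k) = e)
    (E : Fin m → Matrix (Fin n) (Fin n) ℝ)
    (hE : ∀ k, E k = (1/2 : ℝ) • Matrix.single (a k) (b k) 1
                   + (1/2 : ℝ) • Matrix.single (b k) (a k) 1)
    (ℓ : ℕ) (hℓ : 0 < ℓ) :
    IsGreatest
      {y : ℝ | ∃ u : Fin n → ℝ, (∑ i, u i ^ 2) = 1 ∧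
        y = (∑ _i : Fin ℓ,
              (u ⬝ᵥ ((ℓ : ℝ)⁻¹ • (1 : Matrix (Fin n) (Fin n) ℝ)).mulVec u) ^ 2)
          + (∑ k, (u ⬝ᵥ (E k).mulVec u) ^ 2)
          + (∑ k, (u ⬝ᵥ (E k).mulVec u) ^ 2)}
      (1 + ((G.cliqueNum : ℝ) - (ℓ : ℝ)) / ((ℓ : ℝ) * (G.cliqueNum : ℝ))) := by
  have : Nonempty (Fin n) := ⟨⟨0, hn⟩⟩
  have hω : (0 : ℝ) < G.cliqueNum := by exact_mod_cast G.cliqueNum_pos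
  have hvalue : ∀ u : Fin n → ℝ, ∑ i, u i ^ 2 = 1 →
      (∑ _i : Fin ℓ, (u ⬝ᵥ ((ℓ : ℝ)⁻¹ • (1 : Matrix (Fin n) (Fin n) ℝ)).mulVec u) ^ 2)
        + (∑ k, (u ⬝ᵥ (E k).mulVec u) ^ 2) + (∑ k, (u ⬝ᵥ (E k).mulVec u) ^ 2)
      = (ℓ : ℝ)⁻¹ + u ^ 2 ⬝ᵥ G.adjMatrix ℝ *ᵥ u ^ 2 := fun u hu => by
    rw [add_assoc, sum_fin_sq_dotProduct_inv_smul_one_mulVec ℓ hu,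
      G.sum_sq_add_sum_sq_eq_dotProduct_adjMatrix_mulVec hab hinj hsurj hE]
  have harith : (ℓ : ℝ)⁻¹ + (1 - (G.cliqueNum : ℝ)⁻¹) =
      1 + ((G.cliqueNum : ℝ) - ℓ) / (ℓ * G.cliqueNum) := by
    field_simp
    ring
  refine ⟨?_, ?_⟩
  · obtain ⟨x, hx, hsum, hQ⟩ := G.exists_dotProduct_adjMatrix_mulVec_eq_one_sub_inv_cliqueNum
    have hsq : (fun i => √(x i)) ^ 2 = x := funext fun i => Real.sq_sqrt (hx i)
    have hu : ∑ i, √(x i) ^ 2 = 1 := hsum ▸ sum_congr rfl fun i _ => Real.sq_sqrt (hx i)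
    refine ⟨fun i => √(x i), hu, ?_⟩
    rw [hvalue _ hu, hsq, hQ, harith]
  · rintro y ⟨u, hu, rfl⟩
    rw [hvalue u hu, ← harith]
    exact add_le_add_right (G.dotProduct_adjMatrix_mulVec_le_one_sub_inv_cliqueNum (x := u ^ 2)
      (fun i => sq_nonneg (u i)) (by simpa using hu)) _
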